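/- arXiv:1304.2523 — 2 statements merged into one kernel-verified Lean document; each statement's English description precedes it below -/
import Mathlib

section
/- Let R be a (q,s) chain ring and let A be an n×m matrix over R in row canonical form whose first row is nonzero; let p₁ be the pivot of the first row, c₁ its column index, and d₁ = deg(p₁). Then for every element w = (w₁,…,w_m) of the row span of A: (i) p₁ divides every component w_j; and (ii) if j < c₁, then deg(w_j) > d₁. -/
open scoped BigOperators

section ChainRingDefs

variable {R : Type*} [CommRing R]

/-- For a shape `μ = (μ₁,…,μ_s)` (0-indexed as `μ : Fin s → ℕ`), the exponent of `π`
governing the `j`-th coordinate (0-indexed) of the module `R^μ`: the number of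
components of `μ` that are `≤ j`. -/
def shapeExp {s : ℕ} (μ : Fin s → ℕ) (j : ℕ) : ℕ :=
  (Finset.univ.filter fun i : Fin s => μ i ≤ j).card

/-- The last (largest) component `μ_s` of a shape (for monotone `μ`). -/
def shapeLast {s : ℕ} (μ : Fin s → ℕ) : ℕ := Finset.univ.sup μ

/-- The module `R^μ = ⟨1⟩^{μ₁} × ⟨π⟩^{μ₂−μ₁} × ⋯ × ⟨π^{s−1}⟩^{μ_s−μ_{s−1}}`,
realized as a submodule of `R^{μ_s}`. -/
def shapeModule (R : Type*) [CommRing R] (π : R) {s : ℕ} (μ : Fin s → ℕ) :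
    Submodule R (Fin (shapeLast μ) → R) :=
  Submodule.pi Set.univ fun j => Ideal.span {π ^ shapeExp μ (j : ℕ)}

/-- The module `M` has shape `μ`, i.e. `M ≅ R^μ`. -/
def HasShape (R : Type*) [CommRing R] (π : R) {s : ℕ} (μ : Fin s → ℕ)
    (M : Type*) [AddCommGroup M] [Module R M] : Prop :=
  Nonempty (M ≃ₗ[R] shapeModule R π μ)

/-- The row span of a matrix: the submodule of `R^m` generated by its rows. -/
def rowSpan (R : Type*) [CommRing R] {n m : ℕ} (A : Matrix (Fin n) (Fin m) R) :
    Submodule R (Fin m → R) :=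
  Submodule.span R (Set.range fun i => A i)

-- The degree of `a ∈ R`: the unique `l` with `a ∈ ⟨π^l⟩ \ ⟨π^{l+1}⟩` for `a ≠ 0`,
-- and `s` for `a = 0`.
open Classical in
noncomputable def degR (π : R) (s : ℕ) (a : R) : ℕ :=
  if a = 0 then s else sSup {l : ℕ | a ∈ Ideal.span {π ^ l}}

/-- `j` is the pivot position of the row `r`: the earliest entry among the entries of
least degree in that row. -/
def IsPivotIdx (π : R) (s : ℕ) {m : ℕ} (r : Fin m → R) (j : Fin m) : Prop :=
  (∀ k, degR π s (r j) ≤ degR π s (r k)) ∧ ∀ k, k < j → degR π s (r j) < degR π s (r k)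

/-- `V` is a complete set of residues modulo `π` containing `0`. -/
def IsCompleteResidues (π : R) (V : Set R) : Prop :=
  0 ∈ V ∧ ∀ a : R, ∃! v, v ∈ V ∧ a - v ∈ Ideal.span {π}

/-- The set `R(R,π^l) = {Σ_{i<l} a_i π^i : a_i ∈ V}` of residues modulo `π^l`. -/
def residueSet (π : R) (V : Set R) (l : ℕ) : Set R :=
  {x | ∃ a : Fin l → R, (∀ i, a i ∈ V) ∧ x = ∑ i, a i * π ^ (i : ℕ)}

/-- The matrix `A` is in row canonical form (with respect to the residue set `V`). -/
def IsRCF (π : R) (s : ℕ) (V : Set R) {n m : ℕ} (A : Matrix (Fin n) (Fin m) R) : Prop :=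
  -- (1) nonzero rows lie above zero rows
  (∀ i i' : Fin n, i < i' → A i' ≠ 0 → A i ≠ 0) ∧
  -- (2) pivots of smaller degree lie above pivots of larger degree; among pivots of
  -- equal degree, earlier pivots lie above later ones
  (∀ i i' : Fin n, ∀ j j' : Fin m, i < i' → A i ≠ 0 → A i' ≠ 0 →
      IsPivotIdx π s (A i) j → IsPivotIdx π s (A i') j' →
      degR π s (A i j) ≤ degR π s (A i' j') ∧
        (degR π s (A i j) = degR π s (A i' j') → j ≤ j')) ∧
  -- (3) every pivot equals `π^l` for some `0 ≤ l ≤ s-1`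
  (∀ i : Fin n, ∀ j : Fin m, A i ≠ 0 → IsPivotIdx π s (A i) j →
      degR π s (A i j) < s ∧ A i j = π ^ degR π s (A i j)) ∧
  -- (4) entries below a pivot in its column are zero; entries above lie in `R(R,π^l)`
  (∀ i : Fin n, ∀ j : Fin m, A i ≠ 0 → IsPivotIdx π s (A i) j →
      (∀ i' : Fin n, i < i' → A i' j = 0) ∧
      (∀ i' : Fin n, i' < i → A i' j ∈ residueSet π V (degR π s (A i j))))

/-- For a shape `κ` (0-indexed) and `i : Fin s`, the previous component `κ_{i-1}`
(`0` when `i = 0`); with the paper's 1-indexed convention this is `κ_i` for the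
0-indexed position `i` (whose 1-indexed position is `i+1`). -/
def prevVal {s : ℕ} (κ : Fin s → ℕ) (i : Fin s) : ℕ :=
  if (i : ℕ) = 0 then 0
  else κ ⟨(i : ℕ) - 1, lt_of_le_of_lt (Nat.sub_le _ _) i.isLt⟩

end ChainRingDefs

/-!
If `π^{b_j}` divides the `j`-th entry of every row, it divides the `j`-th entry of every
element of the row span. The RCF ordering of pivots gives such a bound with `b_j = d₁`, and
`b_j = d₁ + 1` left of the first pivot `c₁`: a later row has pivot degree at least `d₁`, and
when it is exactly `d₁` its pivot lies at or right of `c₁`, so its entries left of `c₁` have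
strictly larger degree.
-/

section ChainRingDegree

variable {R : Type*} [CommRing R] {π : R} {s : ℕ}

lemma degR_zero (π : R) (s : ℕ) : degR π s 0 = s := by
  simp [degR]

lemma bddAbove_setOf_mem_span_pow (hnil : π ^ s = 0) {a : R} (ha : a ≠ 0) :
    BddAbove {l : ℕ | a ∈ Ideal.span {π ^ l}} := by
  refine ⟨s, fun l hl => ?_⟩
  by_contra! hsl
  rw [Set.mem_ofPred_eq, pow_eq_zero_of_le hsl.le hnil, Ideal.span_singleton_eq_bot.mpr rfl,
    Ideal.mem_bot] at hl
  exact ha hl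

lemma le_degR_iff_pow_dvd (hnil : π ^ s = 0) {a : R} {l : ℕ} (hl : l ≤ s) :
    l ≤ degR π s a ↔ π ^ l ∣ a := by
  by_cases ha : a = 0
  · simp [ha, degR_zero, hl]
  have hbdd := bddAbove_setOf_mem_span_pow hnil ha
  have hne : {l : ℕ | a ∈ Ideal.span {π ^ l}}.Nonempty := ⟨0, by simp⟩
  rw [degR, if_neg ha, ← Ideal.mem_span_singleton]
  refine ⟨fun h => ?_, fun h => le_csSup hbdd h⟩
  exact Ideal.span_singleton_le_span_singleton.mpr (pow_dvd_pow π h) (Nat.sSup_mem hne hbdd)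

end ChainRingDegree

section RowCanonicalForm

variable {R : Type*} [CommRing R] {π : R} {s : ℕ} {n m : ℕ}

lemma exists_isPivotIdx [Nonempty (Fin m)] (π : R) (s : ℕ) (r : Fin m → R) :
    ∃ j, IsPivotIdx π s r j := by
  obtain ⟨j, -, hj⟩ := Finset.univ.exists_min_image
    (fun k => toLex (degR π s (r k), k)) Finset.univ_nonempty
  refine ⟨j, fun k => ?_, fun k hkj => ?_⟩ <;>
    rcases Prod.Lex.le_iff.mp (hj k (Finset.mem_univ k)) with hlt | ⟨heq, hle⟩
  · exact hlt.le
  · exact heq.le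
  · exact hlt
  · exact absurd hkj (not_lt.mpr hle)

lemma dvd_of_mem_rowSpan {A : Matrix (Fin n) (Fin m) R} {x : Fin m → R}
    (hA : ∀ i j, x j ∣ A i j) {w : Fin m → R} (hw : w ∈ rowSpan R A) (j : Fin m) :
    x j ∣ w j := by
  have hle : rowSpan R A ≤ Submodule.pi Set.univ fun j => Ideal.span {x j} := by
    refine Submodule.span_le.mpr ?_
    rintro _ ⟨i, rfl⟩
    simpa [Submodule.mem_pi, Ideal.mem_span_singleton] using hA i
  simpa [Submodule.mem_pi, Ideal.mem_span_singleton] using hle hw j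

lemma IsRCF.degR_pivot_le_of_le {V : Set R} {A : Matrix (Fin n) (Fin m) R}
    (hA : IsRCF π s V A) {i i' : Fin n} (hii' : i ≤ i') (hi : A i ≠ 0) {c : Fin m}
    (hc : IsPivotIdx π s (A i) c) (j : Fin m) :
    degR π s (A i c) ≤ degR π s (A i' j) ∧ (j < c → degR π s (A i c) < degR π s (A i' j)) := by
  obtain ⟨-, hord, hpiv, -⟩ := hA
  rcases hii'.eq_or_lt with rfl | hlt
  · exact ⟨hc.1 j, hc.2 j⟩
  by_cases hi' : A i' = 0
  · have hs := (hpiv i c hi hc).1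
    simp only [hi', Pi.zero_apply, degR_zero]
    exact ⟨hs.le, fun _ => hs⟩
  have : Nonempty (Fin m) := ⟨c⟩
  obtain ⟨c', hc'⟩ := exists_isPivotIdx π s (A i')
  obtain ⟨hdeg, hcol⟩ := hord i i' c c' hlt hi hi' hc hc'
  refine ⟨hdeg.trans (hc'.1 j), fun hjc => ?_⟩
  rcases hdeg.lt_or_eq with hdeg | hdeg
  · exact hdeg.trans_le (hc'.1 j)
  · exact hdeg.trans_lt (hc'.2 j (hjc.trans_le (hcol hdeg)))

end RowCanonicalForm

theorem rcf_first_pivot_divides_general {R : Type*} [CommRing R]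
    (s : ℕ) (π : R)
    (hnil : π ^ s = 0)
    (V : Set R)
    {n m : ℕ} (hn : 0 < n) (A : Matrix (Fin n) (Fin m) R) (hA : IsRCF π s V A)
    (h0 : A ⟨0, hn⟩ ≠ 0) (c : Fin m) (hc : IsPivotIdx π s (A ⟨0, hn⟩) c)
    (w : Fin m → R) (hw : w ∈ rowSpan R A) :
    (∀ j, A ⟨0, hn⟩ c ∣ w j) ∧
    (∀ j : Fin m, j < c → degR π s (A ⟨0, hn⟩ c) < degR π s (w j)) := by
  set i₀ : Fin n := ⟨0, hn⟩
  set d := degR π s (A i₀ c)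
  obtain ⟨hds, hpiv⟩ := hA.2.2.1 i₀ c h0 hc
  set b : Fin m → ℕ := fun j => if j < c then d + 1 else d
  have hb : ∀ j, b j ≤ s := fun j => by dsimp only [b]; split <;> omega
  have hrows : ∀ i j, π ^ b j ∣ A i j := fun i j => by
    have hle := hA.degR_pivot_le_of_le (show i₀ ≤ i from Nat.zero_le _) h0 hc j
    refine (le_degR_iff_pow_dvd hnil (hb j)).mp ?_
    dsimp only [b]
    split
    · exact hle.2 ‹_›
    · exact hle.1
  have hw' := dvd_of_mem_rowSpan (x := fun j => π ^ b j) hrows hw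
  refine ⟨fun j => ?_, fun j hjc => ?_⟩
  · rw [hpiv]
    exact (pow_dvd_pow π (by dsimp only [b]; split <;> omega)).trans (hw' j)
  · have hdeg := (le_degR_iff_pow_dvd hnil (hb j)).mpr (hw' j)
    simp only [b, if_pos hjc] at hdeg
    exact hdeg

/-- For a row canonical form with nonzero first row, the first pivot divides every
component of every element of the row span, and components in earlier columns have
strictly larger degree. -/
theorem rcf_first_pivot_divides {R : Type*} [CommRing R] [Fintype R] [IsLocalRing R] [IsPrincipalIdealRing R]
    (q s : ℕ) (hs : 0 < s) (π : R)
    (hmax : IsLocalRing.maximalIdeal R = Ideal.span {π})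
    (hnil : π ^ s = 0) (hnil' : π ^ (s - 1) ≠ 0)
    (hq : Nat.card (IsLocalRing.ResidueField R) = q)
    (V : Set R) (hV : IsCompleteResidues π V)
    {n m : ℕ} (hn : 0 < n) (A : Matrix (Fin n) (Fin m) R) (hA : IsRCF π s V A)
    (h0 : A ⟨0, hn⟩ ≠ 0) (c : Fin m) (hc : IsPivotIdx π s (A ⟨0, hn⟩) c)
    (w : Fin m → R) (hw : w ∈ rowSpan R A) :
    (∀ j, A ⟨0, hn⟩ c ∣ w j) ∧
    (∀ j : Fin m, j < c → degR π s (A ⟨0, hn⟩ c) < degR π s (w j)) :=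
  rcf_first_pivot_divides_general s π hnil V hn A hA h0 c hc w hw
end

section
/- Let R be a (q,s) chain ring, N ≥ n, and let X ∈ R^{n×m} and Y₁, Y₂ ∈ R^{N×m} be matrices such that the row spans of X, Y₁, and Y₂ are all equal as submodules of R^m. For j = 1,2 let 𝒜_j = {A ∈ R^{N×n} : A has rank n and AX = Y_j}. Then 𝒜₁ and 𝒜₂ are nonempty and |𝒜₁| = |𝒜₂|. -/
open scoped BigOperators

/-!
Since `Y₁` and `Y₂` have the same row span and the same number of rows, `Y₂ = U Y₁` for an
invertible `U`, and `A ↦ U A` is a bijection between the two sets that preserves row spans.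

For existence, start from any `A₀` with `A₀ X = Y`; adding vectors of `K = ker X` to its rows
keeps `A X = Y`, and `rowSpan A₀ + K` is everything. Over the residue field, a row depending on
the others can be replaced by itself plus some `u ∈ K` outside the current row span (such a row
exists as long as the rows do not span, because `N ≥ n`), so some choice of corrections makes
the rows span; by Nakayama, rows whose reductions span already span over `R`. The matrix `U`
is the square case `X = Y₁`, a square matrix with spanning rows being invertible.
-/

open Matrix

section CommRing

variable {R : Type*} [CommRing R] {n N m : ℕ}

lemma rowSpan_eq_range_vecMulLinear (A : Matrix (Fin n) (Fin m) R) :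
    rowSpan R A = LinearMap.range A.vecMulLinear :=
  (range_vecMulLinear A).symm

lemma mem_rowSpan_iff {A : Matrix (Fin n) (Fin m) R} {v : Fin m → R} :
    v ∈ rowSpan R A ↔ ∃ w, w ᵥ* A = v := by
  rw [rowSpan_eq_range_vecMulLinear]; rfl

lemma rowSpan_eq_top_iff_surjective_vecMul {A : Matrix (Fin n) (Fin m) R} :
    rowSpan R A = ⊤ ↔ Function.Surjective A.vecMul := by
  rw [rowSpan_eq_range_vecMulLinear, LinearMap.range_eq_top]; rfl

lemma row_mem_rowSpan (A : Matrix (Fin n) (Fin m) R) (i : Fin n) : A i ∈ rowSpan R A :=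
  Submodule.subset_span ⟨i, rfl⟩

lemma rowSpan_mul_le (M : Matrix (Fin N) (Fin n) R) (A : Matrix (Fin n) (Fin m) R) :
    rowSpan R (M * A) ≤ rowSpan R A :=
  Submodule.span_le.mpr <| Set.range_subset_iff.mpr fun i =>
    mem_rowSpan_iff.mpr ⟨M i, (mul_apply_eq_vecMul M A i).symm⟩

lemma rowSpan_mul_of_mul_eq_one {U V : Matrix (Fin N) (Fin N) R} (h : V * U = 1)
    (A : Matrix (Fin N) (Fin m) R) : rowSpan R (U * A) = rowSpan R A := by
  refine (rowSpan_mul_le U A).antisymm ?_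
  calc rowSpan R A = rowSpan R (V * (U * A)) := by rw [← Matrix.mul_assoc, h, Matrix.one_mul]
    _ ≤ rowSpan R (U * A) := rowSpan_mul_le V _

lemma exists_mul_eq_of_rowSpan_le {X : Matrix (Fin n) (Fin m) R} {Y : Matrix (Fin N) (Fin m) R}
    (h : rowSpan R Y ≤ rowSpan R X) : ∃ A : Matrix (Fin N) (Fin n) R, A * X = Y := by
  choose w hw using fun i => mem_rowSpan_iff.mp (h (row_mem_rowSpan Y i))
  exact ⟨Matrix.of w, Matrix.ext fun i j => by
    rw [mul_apply_eq_vecMul]; exact congrFun (hw i) j⟩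

lemma mul_eq_zero_of_mem_ker {A : Matrix (Fin N) (Fin n) R} {X : Matrix (Fin n) (Fin m) R}
    (h : ∀ i, A i ∈ LinearMap.ker X.vecMulLinear) : A * X = 0 :=
  Matrix.ext fun i j => by rw [mul_apply_eq_vecMul]; exact congrFun (LinearMap.mem_ker.mp (h i)) j

lemma rowSpan_sup_ker_eq_top {A : Matrix (Fin N) (Fin n) R} {X : Matrix (Fin n) (Fin m) R}
    (hX : rowSpan R X ≤ rowSpan R (A * X)) :
    rowSpan R A ⊔ LinearMap.ker X.vecMulLinear = ⊤ := by
  refine eq_top_iff.mpr fun w _ => ?_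
  obtain ⟨u, hu⟩ := mem_rowSpan_iff.mp (hX (mem_rowSpan_iff.mpr ⟨w, rfl⟩))
  have hker : w - u ᵥ* A ∈ LinearMap.ker X.vecMulLinear := by
    rw [LinearMap.mem_ker, vecMulLinear_apply, sub_vecMul, vecMul_vecMul, hu, sub_self]
  have hrow : u ᵥ* A ∈ rowSpan R A := mem_rowSpan_iff.mpr ⟨u, rfl⟩
  simpa using Submodule.add_mem_sup hrow hker

lemma rowSpan_le_sup_of_sub_mem {A B : Matrix (Fin N) (Fin n) R} {K : Submodule R (Fin n → R)}
    (h : ∀ i, B i - A i ∈ K) : rowSpan R A ≤ rowSpan R B ⊔ K :=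
  Submodule.span_le.mpr <| Set.range_subset_iff.mpr fun i => by
    simpa using Submodule.sub_mem_sup (row_mem_rowSpan B i) (h i)

lemma rowSpan_updateRow_add {A : Matrix (Fin N) (Fin n) R} {i : Fin N}
    (hi : A i ∈ Submodule.span R ((fun j => A j) '' (Set.univ \ {i}))) (u : Fin n → R) :
    rowSpan R (A.updateRow i (A i + u)) = rowSpan R A ⊔ Submodule.span R {u} := by
  set B := A.updateRow i (A i + u)
  have hBA : ∀ j, j ≠ i → B j = A j := fun j hj => updateRow_ne hj
  have hothers : Submodule.span R ((fun j => A j) '' (Set.univ \ {i})) ≤ rowSpan R B :=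
    Submodule.span_le.mpr <| by
      rintro _ ⟨j, ⟨-, hj⟩, rfl⟩
      simpa [hBA j hj] using row_mem_rowSpan B j
  have hu : u ∈ rowSpan R B := by
    simpa [B] using sub_mem (row_mem_rowSpan B i) (hothers hi)
  refine le_antisymm (Submodule.span_le.mpr <| Set.range_subset_iff.mpr fun j => ?_)
    (sup_le (Submodule.span_le.mpr <| Set.range_subset_iff.mpr fun j => ?_) ?_)
  · by_cases hj : j = i
    · subst hj
      simpa [B] using
        Submodule.add_mem_sup (row_mem_rowSpan A j) (Submodule.mem_span_singleton_self u)
    · simpa [hBA j hj] using Submodule.mem_sup_left (row_mem_rowSpan A j)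
  · by_cases hj : j = i
    · subst hj; exact hothers hi
    · simpa [hBA j hj] using row_mem_rowSpan B j
  · exact (Submodule.span_singleton_le_iff_mem u _).mpr hu

end CommRing

section Field

variable {k : Type*} [Field k] {n N : ℕ}

lemma exists_rowSpan_lt_of_sup_eq_top (hnN : n ≤ N) {K : Submodule k (Fin n → k)}
    {A : Matrix (Fin N) (Fin n) k} (hA : rowSpan k A ⊔ K = ⊤) (hne : rowSpan k A ≠ ⊤) :
    ∃ B : Matrix (Fin N) (Fin n) k, (∀ i, B i - A i ∈ K) ∧ rowSpan k A < rowSpan k B := by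
  obtain ⟨u, huK, huA⟩ : ∃ u ∈ K, u ∉ rowSpan k A :=
    SetLike.not_le_iff_exists.mp fun hK => hne (by rwa [sup_eq_left.mpr hK] at hA)
  have hdep : ¬ LinearIndependent k (fun i => A i) := fun hli => hne <| by
    refine Submodule.eq_top_of_finrank_eq (le_antisymm (Submodule.finrank_le _) ?_)
    rw [rowSpan, finrank_span_eq_card hli, Module.finrank_fin_fun, Fintype.card_fin]
    exact hnN
  obtain ⟨i, hi⟩ : ∃ i, A i ∈ Submodule.span k ((fun j => A j) '' (Set.univ \ {i})) := by
    simpa [linearIndependent_iff_notMem_span] using hdep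
  refine ⟨A.updateRow i (A i + u), fun j => ?_, ?_⟩
  · by_cases hj : j = i
    · subst hj; simpa using huK
    · simp [updateRow_ne hj]
  · rw [rowSpan_updateRow_add hi]
    exact left_lt_sup.mpr fun h => huA (h (Submodule.mem_span_singleton_self u))

lemma exists_rowSpan_eq_top_of_sup_eq_top (hnN : n ≤ N) {K : Submodule k (Fin n → k)}
    {A : Matrix (Fin N) (Fin n) k} (hA : rowSpan k A ⊔ K = ⊤) :
    ∃ B : Matrix (Fin N) (Fin n) k, (∀ i, B i - A i ∈ K) ∧ rowSpan k B = ⊤ := by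
  -- `B` has maximal row span among the admissible corrections of `A`.
  obtain ⟨B, hBA, hmax⟩ := (InvImage.wf (rowSpan k) wellFounded_gt).has_min
    {B : Matrix (Fin N) (Fin n) k | ∀ i, B i - A i ∈ K} ⟨A, by simp⟩
  refine ⟨B, hBA, by_contra fun hne => ?_⟩
  have hB : rowSpan k B ⊔ K = ⊤ :=
    top_le_iff.mp (hA ▸ sup_le (rowSpan_le_sup_of_sub_mem hBA) le_sup_right)
  obtain ⟨C, hCB, hlt⟩ := exists_rowSpan_lt_of_sup_eq_top hnN hB hne
  exact hmax C (fun i => by simpa using add_mem (hCB i) (hBA i)) hlt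

end Field

namespace IsLocalRing

variable {R : Type*} [CommRing R] [IsLocalRing R] {n N m : ℕ}

variable (R) in
noncomputable def residueVec (ι : Type*) :
    (ι → R) →ₛₗ[residue R] (ι → ResidueField R) where
  toFun w i := residue R (w i)
  map_add' _ _ := funext fun _ => map_add _ _ _
  map_smul' _ _ := funext fun _ => map_mul _ _ _

instance : RingHomSurjective (residue R) := ⟨residue_surjective⟩

lemma residueVec_surjective (ι : Type*) : Function.Surjective (residueVec R ι) :=
  residue_surjective.comp_left

lemma map_residueVec_rowSpan (A : Matrix (Fin N) (Fin n) R) :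
    (rowSpan R A).map (residueVec R (Fin n)) = rowSpan (ResidueField R) (A.map (residue R)) := by
  rw [rowSpan, Submodule.map_span, ← Set.range_comp]; rfl

lemma ker_residueVec_le_smul_top :
    LinearMap.ker (residueVec R (Fin n)) ≤ maximalIdeal R • ⊤ := by
  classical
  intro w hw
  rw [pi_eq_sum_univ w]
  exact Submodule.sum_mem _ fun j _ => Submodule.smul_mem_smul
    ((residue_eq_zero_iff _).mp (congrFun hw j)) Submodule.mem_top

lemma eq_top_of_map_residueVec_eq_top {P : Submodule R (Fin n → R)}
    (h : P.map (residueVec R (Fin n)) = ⊤) : P = ⊤ := by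
  refine eq_top_iff.mpr (Submodule.le_of_le_smul_of_le_jacobson_bot Module.Finite.fg_top
    (jacobson_eq_maximalIdeal ⊥ bot_ne_top).ge fun w _ => ?_)
  obtain ⟨p, hp, hpw⟩ : residueVec R (Fin n) w ∈ P.map (residueVec R (Fin n)) :=
    h ▸ Submodule.mem_top
  have hker : w - p ∈ LinearMap.ker (residueVec R (Fin n)) := by simp [hpw]
  simpa using Submodule.add_mem_sup hp (ker_residueVec_le_smul_top hker)

lemma exists_rowSpan_eq_top_mul_eq (hnN : n ≤ N) {X : Matrix (Fin n) (Fin m) R}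
    {Y : Matrix (Fin N) (Fin m) R} (hXY : rowSpan R X = rowSpan R Y) :
    ∃ A : Matrix (Fin N) (Fin n) R, rowSpan R A = ⊤ ∧ A * X = Y := by
  obtain ⟨A₀, rfl⟩ := exists_mul_eq_of_rowSpan_le hXY.ge
  set K := LinearMap.ker X.vecMulLinear
  have hsup : rowSpan _ (A₀.map (residue R)) ⊔ K.map (residueVec R (Fin n)) = ⊤ := by
    rw [← map_residueVec_rowSpan, ← Submodule.map_sup, rowSpan_sup_ker_eq_top hXY.le,
      Submodule.map_top, LinearMap.range_eq_top.mpr (residueVec_surjective _)]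
  obtain ⟨B, hBK, hB⟩ := exists_rowSpan_eq_top_of_sup_eq_top hnN hsup
  choose z hzK hz using hBK
  refine ⟨A₀ + Matrix.of z, eq_top_of_map_residueVec_eq_top ?_, ?_⟩
  · rw [map_residueVec_rowSpan, ← hB]
    congr
    ext i j
    simpa [residueVec, eq_sub_iff_add_eq'] using congrFun (hz i) j
  · rw [Matrix.add_mul, mul_eq_zero_of_mem_ker (A := Matrix.of z) hzK, add_zero]

lemma exists_mul_eq_of_rowSpan_eq {Y₁ Y₂ : Matrix (Fin N) (Fin m) R}
    (h : rowSpan R Y₁ = rowSpan R Y₂) :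
    ∃ U V : Matrix (Fin N) (Fin N) R, V * U = 1 ∧ U * V = 1 ∧ U * Y₁ = Y₂ := by
  obtain ⟨U, hU, hUY⟩ := exists_rowSpan_eq_top_mul_eq le_rfl h
  obtain ⟨V, hVU⟩ :=
    vecMul_surjective_iff_exists_left_inverse.mp (rowSpan_eq_top_iff_surjective_vecMul.mp hU)
  exact ⟨U, V, hVU, mul_eq_one_comm.mp hVU, hUY⟩

end IsLocalRing

section Shape

variable {R : Type*} [CommRing R] {s n : ℕ}

lemma shapeLast_const (hs : 0 < s) : shapeLast (fun _ : Fin s => n) = n :=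
  Finset.sup_const ⟨⟨0, hs⟩, Finset.mem_univ _⟩ n

lemma shapeModule_const (π : R) : shapeModule R π (fun _ : Fin s => n) = ⊤ := by
  refine eq_top_iff.mpr fun x _ => Submodule.mem_pi.mpr fun j _ => ?_
  have hj : (j : ℕ) < n := j.isLt.trans_le (Finset.sup_le fun _ _ => le_rfl)
  simp [shapeExp, hj.not_ge]

lemma hasShape_const_of_eq_top (hs : 0 < s) (π : R) {P : Submodule R (Fin n → R)}
    (hP : P = ⊤) : HasShape R π (fun _ : Fin s => n) P := by
  subst hP
  exact ⟨Submodule.topEquiv.trans <|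
    (LinearEquiv.funCongrLeft R R (finCongr (shapeLast_const hs))).trans <|
    Submodule.topEquiv.symm.trans (LinearEquiv.ofEq _ _ (shapeModule_const π).symm)⟩

end Shape

theorem transfer_sets_equinumerous_general {R : Type*} [CommRing R] [IsLocalRing R]
    (s : ℕ) (hs : 0 < s) (π : R)
    {n N m : ℕ} (hnN : n ≤ N)
    (X : Matrix (Fin n) (Fin m) R) (Y₁ Y₂ : Matrix (Fin N) (Fin m) R)
    (h1 : rowSpan R X = rowSpan R Y₁) (h2 : rowSpan R X = rowSpan R Y₂) :
    {A : Matrix (Fin N) (Fin n) R |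
        HasShape R π (fun _ : Fin s => n) ↥(rowSpan R A) ∧ A * X = Y₁}.Nonempty ∧
    {A : Matrix (Fin N) (Fin n) R |
        HasShape R π (fun _ : Fin s => n) ↥(rowSpan R A) ∧ A * X = Y₂}.Nonempty ∧
    Nat.card {A : Matrix (Fin N) (Fin n) R |
        HasShape R π (fun _ : Fin s => n) ↥(rowSpan R A) ∧ A * X = Y₁} =
      Nat.card {A : Matrix (Fin N) (Fin n) R |
        HasShape R π (fun _ : Fin s => n) ↥(rowSpan R A) ∧ A * X = Y₂} := by
  obtain ⟨A₁, hA₁, hA₁X⟩ := IsLocalRing.exists_rowSpan_eq_top_mul_eq hnN h1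
  obtain ⟨A₂, hA₂, hA₂X⟩ := IsLocalRing.exists_rowSpan_eq_top_mul_eq hnN h2
  obtain ⟨U, V, hVU, hUV, rfl⟩ := IsLocalRing.exists_mul_eq_of_rowSpan_eq (h1.symm.trans h2)
  let mulU : Matrix (Fin N) (Fin n) R ≃ Matrix (Fin N) (Fin n) R :=
    { toFun := (U * ·)
      invFun := (V * ·)
      left_inv := fun A => by simp only [← Matrix.mul_assoc, hVU, Matrix.one_mul]
      right_inv := fun A => by simp only [← Matrix.mul_assoc, hUV, Matrix.one_mul] }
  refine ⟨⟨A₁, hasShape_const_of_eq_top hs π hA₁, hA₁X⟩,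
    ⟨A₂, hasShape_const_of_eq_top hs π hA₂, hA₂X⟩,
    Nat.card_congr (mulU.subtypeEquiv fun A => ?_)⟩
  simp only [Set.mem_ofPred_eq, mulU, Equiv.coe_fn_mk, Matrix.mul_assoc,
    (Matrix.mul_right_injective_of_inv V U hVU).eq_iff]
  rw [rowSpan_mul_of_mul_eq_one hVU A]

/-- If `X`, `Y₁`, `Y₂` have equal row spans, then the sets of full-rank transfer
matrices mapping `X` to `Y₁` resp. `Y₂` are nonempty and equinumerous. -/
theorem transfer_sets_equinumerous {R : Type*} [CommRing R] [Fintype R] [IsLocalRing R] [IsPrincipalIdealRing R]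
    (q s : ℕ) (hs : 0 < s) (π : R)
    (hmax : IsLocalRing.maximalIdeal R = Ideal.span {π})
    (hnil : π ^ s = 0) (hnil' : π ^ (s - 1) ≠ 0)
    (hq : Nat.card (IsLocalRing.ResidueField R) = q)
    {n N m : ℕ} (hnN : n ≤ N)
    (X : Matrix (Fin n) (Fin m) R) (Y₁ Y₂ : Matrix (Fin N) (Fin m) R)
    (h1 : rowSpan R X = rowSpan R Y₁) (h2 : rowSpan R X = rowSpan R Y₂) :
    {A : Matrix (Fin N) (Fin n) R |
        HasShape R π (fun _ : Fin s => n) ↥(rowSpan R A) ∧ A * X = Y₁}.Nonempty ∧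
    {A : Matrix (Fin N) (Fin n) R |
        HasShape R π (fun _ : Fin s => n) ↥(rowSpan R A) ∧ A * X = Y₂}.Nonempty ∧
    Nat.card {A : Matrix (Fin N) (Fin n) R |
        HasShape R π (fun _ : Fin s => n) ↥(rowSpan R A) ∧ A * X = Y₁} =
      Nat.card {A : Matrix (Fin N) (Fin n) R |
        HasShape R π (fun _ : Fin s => n) ↥(rowSpan R A) ∧ A * X = Y₂} :=
  transfer_sets_equinumerous_general s hs π hnN X Y₁ Y₂ h1 h2
end
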